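/- Let T ∈ A⊗B⊗C be 1_A- and 1_B-generic, with T_A(α₀) and T_B(β₀) of full rank, satisfying the A-Strassen equations, and let T̃ ∈ S²C*⊗C be the associated commutative bilinear multiplication on C. Then T(α₀,β₀) ∈ C is a unit for this multiplication, and the space T(A*)·T_A(α₀)⁻¹ ⊆ End(C) is closed under composition (End-closed): for all α₁, α₂ ∈ A* there exists α' ∈ A* with T_A(α₁)T_A(α₀)⁻¹T_A(α₂)T_A(α₀)⁻¹ = T_A(α')T_A(α₀)⁻¹. -/
import Mathlib


open Matrix

/-- The contraction `T_A(α) : B* → C` of `T ∈ A⊗B⊗C` with `α ∈ A*`. -/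
noncomputable def TA {m : ℕ} (T : Fin m → Fin m → Fin m → ℂ) (α : Fin m → ℂ) :
    Matrix (Fin m) (Fin m) ℂ := fun k j => ∑ i, α i * T i j k

/-- The contraction `T_B(β) : A* → C` of `T` with `β ∈ B*`. -/
noncomputable def TB {m : ℕ} (T : Fin m → Fin m → Fin m → ℂ) (β : Fin m → ℂ) :
    Matrix (Fin m) (Fin m) ℂ := fun k i => ∑ j, β j * T i j k

/-- The vector `T(α, β) ∈ C`. -/
noncomputable def Tvec {m : ℕ} (T : Fin m → Fin m → Fin m → ℂ)
    (α β : Fin m → ℂ) : Fin m → ℂ := fun k => ∑ i, ∑ j, α i * β j * T i j k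

/-- The associated bilinear multiplication on `C`:
`T̃(c₁, c₂) := T(T_B(β₀)⁻¹ c₁, T_A(α₀)⁻¹ c₂)`. -/
noncomputable def Tmul {m : ℕ} (T : Fin m → Fin m → Fin m → ℂ)
    (α₀ β₀ : Fin m → ℂ) (c₁ c₂ : Fin m → ℂ) : Fin m → ℂ :=
  Tvec T ((TB T β₀)⁻¹ *ᵥ c₁) ((TA T α₀)⁻¹ *ᵥ c₂)

lemma Tvec_eq_TA {m : ℕ} (T : Fin m → Fin m → Fin m → ℂ) (α β : Fin m → ℂ) :
    Tvec T α β = TA T α *ᵥ β := by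
  funext k
  simp only [Tvec, TA, mulVec, dotProduct, Finset.sum_mul]
  rw [Finset.sum_comm]
  exact Finset.sum_congr rfl fun j _ => Finset.sum_congr rfl fun i _ => by ring

lemma Tvec_eq_TB {m : ℕ} (T : Fin m → Fin m → Fin m → ℂ) (α β : Fin m → ℂ) :
    Tvec T α β = TB T β *ᵥ α := by
  funext k
  simp only [Tvec, TB, mulVec, dotProduct, Finset.sum_mul]
  exact Finset.sum_congr rfl fun i _ => Finset.sum_congr rfl fun j _ => by ring

lemma swap_mulVec {m : ℕ} (T : Fin m → Fin m → Fin m → ℂ) (α β : Fin m → ℂ) :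
    TA T α *ᵥ β = TB T β *ᵥ α := by
  rw [← Tvec_eq_TA, Tvec_eq_TB]

lemma ext_of_mulVec {m : ℕ} {M M' : Matrix (Fin m) (Fin m) ℂ}
    (h : ∀ v, M *ᵥ v = M' *ᵥ v) : M = M' := by
  ext i j
  have := congrFun (h (Pi.single j 1)) i
  simpa [mulVec_single] using this


/-- Let `T ∈ A⊗B⊗C` be `1_A`- and `1_B`-generic (with `T_A(α₀)`, `T_B(β₀)` of
full rank) and satisfy the `A`-Strassen equations.  Then `T(α₀,β₀)` is a unit
for the associated multiplication `T̃` on `C`, and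
`T(A*)·T_A(α₀)⁻¹ ⊆ End(C)` is closed under composition: for all `α₁, α₂`
there is `α'` with
`T_A(α₁)T_A(α₀)⁻¹T_A(α₂)T_A(α₀)⁻¹ = T_A(α')T_A(α₀)⁻¹`. -/
theorem unit_and_endClosed_of_strassen {m : ℕ} (T : Fin m → Fin m → Fin m → ℂ)
    (α₀ β₀ : Fin m → ℂ)
    (hA : IsUnit (TA T α₀).det) (hB : IsUnit (TB T β₀).det)
    (hStrassen : ∀ α₁ α₂ : Fin m → ℂ,
      TA T α₁ * (TA T α₀)⁻¹ * TA T α₂ = TA T α₂ * (TA T α₀)⁻¹ * TA T α₁) :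
    (∀ c : Fin m → ℂ,
      Tmul T α₀ β₀ (Tvec T α₀ β₀) c = c ∧ Tmul T α₀ β₀ c (Tvec T α₀ β₀) = c) ∧
    (∀ α₁ α₂ : Fin m → ℂ, ∃ α' : Fin m → ℂ,
      TA T α₁ * (TA T α₀)⁻¹ * TA T α₂ * (TA T α₀)⁻¹ = TA T α' * (TA T α₀)⁻¹) := by
  have hNA : (TA T α₀)⁻¹ * TA T α₀ = 1 := nonsing_inv_mul _ hA
  have hAN : TA T α₀ * (TA T α₀)⁻¹ = 1 := mul_nonsing_inv _ hA
  have hQB : (TB T β₀)⁻¹ * TB T β₀ = 1 := nonsing_inv_mul _ hB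
  have hBQ : TB T β₀ * (TB T β₀)⁻¹ = 1 := mul_nonsing_inv _ hB
  have cancelA : ∀ v, (TA T α₀)⁻¹ *ᵥ (TA T α₀ *ᵥ v) = v := fun v => by
    rw [mulVec_mulVec, hNA, one_mulVec]
  have cancelA' : ∀ v, TA T α₀ *ᵥ ((TA T α₀)⁻¹ *ᵥ v) = v := fun v => by
    rw [mulVec_mulVec, hAN, one_mulVec]
  have cancelB : ∀ v, (TB T β₀)⁻¹ *ᵥ (TB T β₀ *ᵥ v) = v := fun v => by
    rw [mulVec_mulVec, hQB, one_mulVec]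
  have cancelB' : ∀ v, TB T β₀ *ᵥ ((TB T β₀)⁻¹ *ᵥ v) = v := fun v => by
    rw [mulVec_mulVec, hBQ, one_mulVec]
  constructor
  · intro c
    constructor
    · simp only [Tmul]
      rw [Tvec_eq_TB T α₀ β₀, cancelB, Tvec_eq_TA, cancelA']
    · simp only [Tmul]
      rw [Tvec_eq_TA T α₀ β₀, cancelA, Tvec_eq_TB, cancelB']
  · intro α₁ α₂
    have comm : ∀ γ δ, TA T γ * (TA T α₀)⁻¹ * (TA T δ * (TA T α₀)⁻¹)
        = TA T δ * (TA T α₀)⁻¹ * (TA T γ * (TA T α₀)⁻¹) :=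
      fun γ δ => by rw [← mul_assoc, ← mul_assoc, hStrassen γ δ]
    obtain ⟨c₀, hc₀⟩ : ∃ c, c = TA T α₀ *ᵥ β₀ := ⟨_, rfl⟩
    have hPc0 : ∀ γ, (TA T γ * (TA T α₀)⁻¹) *ᵥ c₀ = TB T β₀ *ᵥ γ := fun γ => by
      rw [hc₀, ← mulVec_mulVec, cancelA, swap_mulVec]
    obtain ⟨α', hα'⟩ : ∃ a, a = (TB T β₀)⁻¹ *ᵥ
        ((TA T α₁ * (TA T α₀)⁻¹ * (TA T α₂ * (TA T α₀)⁻¹)) *ᵥ c₀) := ⟨_, rfl⟩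
    refine ⟨α', ?_⟩
    have comm2 : ∀ γ, (TA T α₁ * (TA T α₀)⁻¹ * (TA T α₂ * (TA T α₀)⁻¹)) * (TA T γ * (TA T α₀)⁻¹)
        = (TA T γ * (TA T α₀)⁻¹) * (TA T α₁ * (TA T α₀)⁻¹ * (TA T α₂ * (TA T α₀)⁻¹)) := fun γ => by
      rw [mul_assoc, comm α₂ γ, ← mul_assoc, comm α₁ γ, mul_assoc]
    have key : ∀ v, (TA T α₁ * (TA T α₀)⁻¹ * (TA T α₂ * (TA T α₀)⁻¹)) *ᵥ v
        = (TA T α' * (TA T α₀)⁻¹) *ᵥ v := by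
      intro v
      have hv : (TA T ((TB T β₀)⁻¹ *ᵥ v) * (TA T α₀)⁻¹) *ᵥ c₀ = v := by
        rw [hPc0, cancelB']
      calc (TA T α₁ * (TA T α₀)⁻¹ * (TA T α₂ * (TA T α₀)⁻¹)) *ᵥ v
          = (TA T α₁ * (TA T α₀)⁻¹ * (TA T α₂ * (TA T α₀)⁻¹)) *ᵥ
              ((TA T ((TB T β₀)⁻¹ *ᵥ v) * (TA T α₀)⁻¹) *ᵥ c₀) := by rw [hv]
        _ = ((TA T α₁ * (TA T α₀)⁻¹ * (TA T α₂ * (TA T α₀)⁻¹)) *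
              (TA T ((TB T β₀)⁻¹ *ᵥ v) * (TA T α₀)⁻¹)) *ᵥ c₀ := mulVec_mulVec c₀ _ _
        _ = ((TA T ((TB T β₀)⁻¹ *ᵥ v) * (TA T α₀)⁻¹) *
              (TA T α₁ * (TA T α₀)⁻¹ * (TA T α₂ * (TA T α₀)⁻¹))) *ᵥ c₀ := by rw [comm2]
        _ = (TA T ((TB T β₀)⁻¹ *ᵥ v) * (TA T α₀)⁻¹) *ᵥ
              ((TA T α₁ * (TA T α₀)⁻¹ * (TA T α₂ * (TA T α₀)⁻¹)) *ᵥ c₀) :=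
            (mulVec_mulVec c₀ _ _).symm
        _ = (TA T ((TB T β₀)⁻¹ *ᵥ v) * (TA T α₀)⁻¹) *ᵥ (TB T β₀ *ᵥ α') := by
            rw [hα', cancelB']
        _ = (TA T ((TB T β₀)⁻¹ *ᵥ v) * (TA T α₀)⁻¹) *ᵥ
              ((TA T α' * (TA T α₀)⁻¹) *ᵥ c₀) := by rw [hPc0]
        _ = ((TA T ((TB T β₀)⁻¹ *ᵥ v) * (TA T α₀)⁻¹) * (TA T α' * (TA T α₀)⁻¹)) *ᵥ c₀ :=
            mulVec_mulVec c₀ _ _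
        _ = ((TA T α' * (TA T α₀)⁻¹) * (TA T ((TB T β₀)⁻¹ *ᵥ v) * (TA T α₀)⁻¹)) *ᵥ c₀ := by
            rw [comm]
        _ = (TA T α' * (TA T α₀)⁻¹) *ᵥ
              ((TA T ((TB T β₀)⁻¹ *ᵥ v) * (TA T α₀)⁻¹) *ᵥ c₀) := (mulVec_mulVec c₀ _ _).symm
        _ = (TA T α' * (TA T α₀)⁻¹) *ᵥ v := by rw [hv]
    have hEq := ext_of_mulVec key
    rw [mul_assoc (TA T α₁ * (TA T α₀)⁻¹) (TA T α₂) (TA T α₀)⁻¹]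
    exact hEq
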